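/- The four-qubit invariant M(ψ) = |Σ ψ_{i₁j₁k₁l₁}ψ_{i₂j₂k₂l₂} ε_{i₁i₂}ε_{j₁j₂}ε_{k₁k₂}ε_{l₁l₂}| is invariant under ψ ↦ (A₁⊗A₂⊗A₃⊗A₄)ψ for all A_i ∈ SL(2,ℂ). -/

import Mathlib

/-!
The ε-contraction is the bilinear form `ψ ⬝ᵥ (ε ⊗ₖ ε ⊗ₖ ε ⊗ₖ ε) *ᵥ ψ`, and `A₁ ⊗ A₂ ⊗ A₃ ⊗ A₄`
acts on `ψ` through the Kronecker product `K` of the `Aᵢ`. Substituting `K *ᵥ ψ` replaces the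
matrix `E` of the form by `Kᵀ * E * K`, and since the Kronecker product is multiplicative this
happens factor by factor. For a `2 × 2` matrix `Aᵀ ε A = det A • ε`, so the contraction is
multiplied by `det A₁ * det A₂ * det A₃ * det A₄ = 1`.
-/

open Matrix

/-- The two-index Levi-Civita symbol. -/
def eps2 : Fin 2 → Fin 2 → ℂ :=
  fun i j => if i = 0 ∧ j = 1 then 1 else if i = 1 ∧ j = 0 then -1 else 0

/-- Action of `A₁ ⊗ A₂ ⊗ A₃ ⊗ A₄` on a four-qubit state given by its coefficients. -/
noncomputable def act4 (A₁ A₂ A₃ A₄ : Matrix (Fin 2) (Fin 2) ℂ)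
    (ψ : Fin 2 × Fin 2 × Fin 2 × Fin 2 → ℂ) : Fin 2 × Fin 2 × Fin 2 × Fin 2 → ℂ :=
  fun x => ∑ i, ∑ j, ∑ k, ∑ l,
    A₁ x.1 i * A₂ x.2.1 j * A₃ x.2.2.1 k * A₄ x.2.2.2 l * ψ (i, j, k, l)

/-- The quadratic four-qubit invariant
`M(ψ) = |Σ ψ_{i₁j₁k₁l₁} ψ_{i₂j₂k₂l₂} ε_{i₁i₂} ε_{j₁j₂} ε_{k₁k₂} ε_{l₁l₂}|`. -/
noncomputable def M4 (ψ : Fin 2 × Fin 2 × Fin 2 × Fin 2 → ℂ) : ℝ :=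
  ‖(∑ i₁, ∑ i₂, ∑ j₁, ∑ j₂, ∑ k₁, ∑ k₂, ∑ l₁, ∑ l₂,
    ψ (i₁, j₁, k₁, l₁) * ψ (i₂, j₂, k₂, l₂) *
      eps2 i₁ i₂ * eps2 j₁ j₂ * eps2 k₁ k₂ * eps2 l₁ l₂)‖

open scoped Kronecker

theorem mulVec_dotProduct_mulVec_mulVec {m n R : Type*} [Fintype m] [Fintype n]
    [CommSemiring R] (A : Matrix m n R) (E : Matrix m m R) (v w : n → R) :
    (A *ᵥ v) ⬝ᵥ E *ᵥ (A *ᵥ w) = v ⬝ᵥ (Aᵀ * E * A) *ᵥ w := by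
  rw [dotProduct_mulVec, vecMul_mulVec, ← dotProduct_mulVec, mulVec_mulVec]

theorem transpose_kronecker_mul_kronecker_mul_kronecker {l m n p R : Type*} [Fintype l]
    [Fintype m] [Fintype n] [Fintype p] [CommSemiring R]
    (A : Matrix l m R) (B : Matrix n p R) (E : Matrix l l R) (F : Matrix n n R) :
    (A ⊗ₖ B)ᵀ * (E ⊗ₖ F) * (A ⊗ₖ B) = (Aᵀ * E * A) ⊗ₖ (Bᵀ * F * B) := by
  rw [← kroneckerMap_transpose, mul_kronecker_mul, mul_kronecker_mul]

def epsMatrix : Matrix (Fin 2) (Fin 2) ℂ := Matrix.of eps2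

theorem transpose_mul_epsMatrix_mul (A : Matrix (Fin 2) (Fin 2) ℂ) :
    Aᵀ * epsMatrix * A = A.det • epsMatrix := by
  ext i j
  fin_cases i <;> fin_cases j <;>
    simp [epsMatrix, eps2, det_fin_two, mul_apply, Fin.sum_univ_two] <;> ring

def eps4 : Matrix (Fin 2 × Fin 2 × Fin 2 × Fin 2) (Fin 2 × Fin 2 × Fin 2 × Fin 2) ℂ :=
  epsMatrix ⊗ₖ (epsMatrix ⊗ₖ (epsMatrix ⊗ₖ epsMatrix))

theorem transpose_kronecker_mul_eps4_mul_kronecker (A₁ A₂ A₃ A₄ : Matrix (Fin 2) (Fin 2) ℂ) :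
    (A₁ ⊗ₖ (A₂ ⊗ₖ (A₃ ⊗ₖ A₄)))ᵀ * eps4 * (A₁ ⊗ₖ (A₂ ⊗ₖ (A₃ ⊗ₖ A₄)))
      = (A₁.det * A₂.det * A₃.det * A₄.det) • eps4 := by
  simp only [eps4, transpose_kronecker_mul_kronecker_mul_kronecker, transpose_mul_epsMatrix_mul,
    smul_kronecker, kronecker_smul, smul_smul]
  ring_nf

theorem act4_eq_kronecker_mulVec (A₁ A₂ A₃ A₄ : Matrix (Fin 2) (Fin 2) ℂ)
    (ψ : Fin 2 × Fin 2 × Fin 2 × Fin 2 → ℂ) :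
    act4 A₁ A₂ A₃ A₄ ψ = (A₁ ⊗ₖ (A₂ ⊗ₖ (A₃ ⊗ₖ A₄))) *ᵥ ψ := by
  ext x
  simp only [act4, mulVec, dotProduct, Fintype.sum_prod_type, kroneckerMap_apply, mul_assoc]

set_option maxRecDepth 10000 in
theorem M4_eq_norm_dotProduct_eps4_mulVec (ψ : Fin 2 × Fin 2 × Fin 2 × Fin 2 → ℂ) :
    M4 ψ = ‖ψ ⬝ᵥ eps4 *ᵥ ψ‖ := by
  simp only [M4, eps4, epsMatrix, dotProduct, mulVec, Fintype.sum_prod_type, kroneckerMap_apply,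
    of_apply, Fin.sum_univ_two]
  ring_nf

/-- the invariant `M4` is invariant under
`ψ ↦ (A₁⊗A₂⊗A₃⊗A₄)ψ` with all `Aᵢ ∈ SL(2,ℂ)`. -/
theorem M4_SL_invariant (ψ : Fin 2 × Fin 2 × Fin 2 × Fin 2 → ℂ)
    (A₁ A₂ A₃ A₄ : Matrix (Fin 2) (Fin 2) ℂ)
    (h₁ : A₁.det = 1) (h₂ : A₂.det = 1) (h₃ : A₃.det = 1) (h₄ : A₄.det = 1) :
    M4 (act4 A₁ A₂ A₃ A₄ ψ) = M4 ψ := by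
  rw [M4_eq_norm_dotProduct_eps4_mulVec, M4_eq_norm_dotProduct_eps4_mulVec,
    act4_eq_kronecker_mulVec, mulVec_dotProduct_mulVec_mulVec,
    transpose_kronecker_mul_eps4_mul_kronecker, h₁, h₂, h₃, h₄, mul_one, mul_one, mul_one,
    one_smul]
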